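/- The scalar system x'(t) = -x(t)/(t+1) on Ω = [-1,1] is not SOST (contraction after small overshoot and transient): there exist τ, ε > 0 such that for every ℓ > 0 there are t₂ ≥ t₁ ≥ 0 and a, b ∈ Ω with |x(t₂+τ, t₁, a) - x(t₂+τ, t₁, b)| > (1+ε) exp(-(t₂-t₁)ℓ) |a-b|. -/

import Mathlib

open Real Set

/-- Solution of `x' = -x/(t+1)` with `x(t₁) = a`. -/
noncomputable def sol (t t₁ a : ℝ) : ℝ := a * (t₁ + 1) / (t + 1)

/-! Solutions of `x' = -x/(t+1)` approach each other only like `1/t`, whereas SOST demands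
exponential contraction at some rate `ℓ > 0`. With `t₁ = 0`, `τ = 1`, `a = 1`, `b = 0` the
distance at time `t₂ + 1` is `1/(t₂ + 2)`, which exceeds `2 exp(-t₂ ℓ)` for `t₂` large. -/

open Filter Asymptotics

lemma sol_sub_sol (t t₁ a b : ℝ) : sol t t₁ a - sol t t₁ b = (a - b) * (t₁ + 1) / (t + 1) := by
  unfold sol
  ring

lemma isLittleO_affine_exp_mul_atTop {ℓ : ℝ} (hℓ : 0 < ℓ) (C c : ℝ) :
    (fun t : ℝ => C * (t + c)) =o[atTop] fun t => exp (ℓ * t) := by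
  have h := (isLittleO_pow_exp_pos_mul_atTop 1 hℓ).add
    ((isLittleO_pow_exp_pos_mul_atTop 0 hℓ).const_mul_left c)
  simpa using h.const_mul_left C

lemma exists_nonneg_affine_lt_exp_mul {ℓ : ℝ} (hℓ : 0 < ℓ) (C c : ℝ) :
    ∃ T ≥ 0, C * (T + c) < exp (T * ℓ) := by
  have hsmall := (isLittleO_affine_exp_mul_atTop hℓ C c).def one_half_pos
  obtain ⟨T, hT, hT0⟩ := (hsmall.and (eventually_ge_atTop 0)).exists
  refine ⟨T, hT0, ?_⟩
  rw [Real.norm_of_nonneg (exp_pos _).le, mul_comm ℓ] at hT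
  have := exp_pos (T * ℓ)
  linarith [le_abs_self (C * (T + c)), Real.norm_eq_abs (C * (T + c))]

/-- The system `x' = -x/(t+1)` on `Ω = [-1,1]` is not SOST: there exist `τ, ε > 0`
such that for every `ℓ > 0` one can find `t₂ ≥ t₁ ≥ 0` and `a, b ∈ Ω` with
`|x(t₂+τ,t₁,a) - x(t₂+τ,t₁,b)| > (1+ε) exp(-(t₂-t₁)ℓ) |a-b|`. -/
theorem stmt3 :
    ∃ τ : ℝ, 0 < τ ∧ ∃ ε : ℝ, 0 < ε ∧
      ∀ ℓ : ℝ, 0 < ℓ →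
        ∃ t₁ t₂ a b : ℝ, 0 ≤ t₁ ∧ t₁ ≤ t₂ ∧ a ∈ Icc (-1 : ℝ) 1 ∧ b ∈ Icc (-1 : ℝ) 1 ∧
          (1 + ε) * Real.exp (-(t₂ - t₁) * ℓ) * |a - b| <
            |sol (t₂ + τ) t₁ a - sol (t₂ + τ) t₁ b| := by
  refine ⟨1, one_pos, 1, one_pos, fun ℓ hℓ => ?_⟩
  obtain ⟨T, hT0, hT⟩ := exists_nonneg_affine_lt_exp_mul hℓ 2 2
  refine ⟨0, T, 1, 0, le_rfl, hT0, ⟨by norm_num, le_rfl⟩, ⟨by norm_num, by norm_num⟩, ?_⟩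
  have hpos : (0 : ℝ) < T + 2 := by linarith
  have hdist : |sol (T + 1) 0 1 - sol (T + 1) 0 0| = (T + 2)⁻¹ := by
    rw [sol_sub_sol, abs_of_pos (by positivity)]
    ring
  rw [hdist, sub_zero, sub_zero, abs_one, mul_one, neg_mul, exp_neg, ← div_eq_mul_inv,
    div_lt_iff₀ (exp_pos _), ← div_eq_inv_mul, lt_div_iff₀ hpos]
  linarith
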